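/- arXiv:1309.0797 — 8 statements merged into one kernel-verified Lean document; each statement's English description precedes it below -/
import Mathlib

section
/- Let A be a bounded self-adjoint operator on a complex Hilbert space H, and let a, b, c > 0 satisfy ac > b(a+b+3c). Suppose u, v ∈ H satisfy ⟨Au, u⟩ ≥ a‖u‖² and ‖Av‖ ≤ b‖v‖. If u ≠ 0 or v ≠ 0, then Re⟨A(u+v), u+v⟩ + c‖u+v‖² > 0. -/
open InnerProductSpace RCLike

/-!
Self-adjointness merges the two cross terms of `Re⟨A(u+v), u+v⟩` into `2 Re⟨Av, u⟩`, and
Cauchy–Schwarz with `‖Av‖ ≤ b‖v‖` and `‖u+v‖ ≥ |‖u‖ - ‖v‖|` bounds the whole expression below by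
`(a+c)‖u‖² - 2(b+c)‖u‖‖v‖ + (c-b)‖v‖²`. The discriminant condition for this binary quadratic form
to be positive definite is exactly `a c > b (a + b + 3 c)`.
-/

-- Completing the square: `(a + c) Q(x, y) = ((a + c) x - (b + c) y)² + (a c - b (a + b + 3 c)) y²`.
theorem quadratic_form_pos {a b c x y : ℝ} (hac : 0 < a + c) (habc : b * (a + b + 3 * c) < a * c)
    (hxy : x ≠ 0 ∨ y ≠ 0) :
    0 < (a + c) * x ^ 2 - 2 * (b + c) * x * y + (c - b) * y ^ 2 := by
  have hdisc : 0 < a * c - b * (a + b + 3 * c) := by linarith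
  have hsum : 0 < ((a + c) * x - (b + c) * y) ^ 2 + (a * c - b * (a + b + 3 * c)) * y ^ 2 := by
    rcases eq_or_ne y 0 with rfl | hy
    · have hx : x ≠ 0 := by simpa using hxy
      simp only [mul_zero, sub_zero, ne_eq, OfNat.ofNat_ne_zero, not_false_eq_true, zero_pow,
        add_zero]
      have := hac.ne'
      positivity
    · positivity
  refine pos_of_mul_pos_right (hsum.trans_eq ?_) hac.le
  ring

section InnerProduct

variable {𝕜 E : Type*} [RCLike 𝕜] [NormedAddCommGroup E] [InnerProductSpace 𝕜 E]

theorem LinearMap.IsSymmetric.re_inner_map_add_self {T : E →ₗ[𝕜] E} (hT : T.IsSymmetric)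
    (u v : E) :
    re (inner 𝕜 (T (u + v)) (u + v)) =
      re (inner 𝕜 (T u) u) + 2 * re (inner 𝕜 (T v) u) + re (inner 𝕜 (T v) v) := by
  have hcross : re (inner 𝕜 (T u) v) = re (inner 𝕜 (T v) u) := by
    rw [← hT.conj_inner_sym, conj_re]
  rw [map_add, inner_add_left, inner_add_right, inner_add_right]
  simp only [map_add, hcross]
  ring

theorem neg_mul_le_re_inner_of_norm_le {b : ℝ} {x : E} {y : E} (w : E) (h : ‖x‖ ≤ b * ‖y‖) :
    -(b * ‖y‖ * ‖w‖) ≤ re (inner 𝕜 x w) := by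
  have hle : -re (inner 𝕜 x w) ≤ ‖x‖ * ‖w‖ := by
    simpa [inner_neg_left] using re_inner_le_norm (𝕜 := 𝕜) (-x) w
  nlinarith [mul_le_mul_of_nonneg_right h (norm_nonneg w)]

theorem sq_norm_sub_norm_le_sq_norm_add (u v : E) : (‖u‖ - ‖v‖) ^ 2 ≤ ‖u + v‖ ^ 2 := by
  simpa [sq_le_sq, abs_norm] using abs_norm_sub_norm_le u (-v)

theorem LinearMap.IsSymmetric.quadratic_lower_bound {T : E →ₗ[𝕜] E} (hT : T.IsSymmetric)
    {a b c : ℝ} (hc : 0 ≤ c) {u v : E} (hu : a * ‖u‖ ^ 2 ≤ re (inner 𝕜 (T u) u))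
    (hv : ‖T v‖ ≤ b * ‖v‖) :
    (a + c) * ‖u‖ ^ 2 - 2 * (b + c) * ‖u‖ * ‖v‖ + (c - b) * ‖v‖ ^ 2 ≤
      re (inner 𝕜 (T (u + v)) (u + v)) + c * ‖u + v‖ ^ 2 := by
  have hcross := neg_mul_le_re_inner_of_norm_le (𝕜 := 𝕜) u hv
  have hdiag := neg_mul_le_re_inner_of_norm_le (𝕜 := 𝕜) v hv
  have hnorm := mul_le_mul_of_nonneg_left (sq_norm_sub_norm_le_sq_norm_add u v) hc
  rw [hT.re_inner_map_add_self]
  linarith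

end InnerProduct

theorem stmt1_general {H : Type*} [NormedAddCommGroup H] [InnerProductSpace ℂ H] [CompleteSpace H]
    (A : H →L[ℂ] H) (hA : IsSelfAdjoint A)
    (a b c : ℝ) (ha : 0 < a) (hc : 0 < c)
    (habc : a * c > b * (a + b + 3 * c))
    (u v : H)
    (hu : a * ‖u‖ ^ 2 ≤ (inner ℂ (A u) u : ℂ).re)
    (hv : ‖A v‖ ≤ b * ‖v‖)
    (hne : u ≠ 0 ∨ v ≠ 0) :
    0 < (inner ℂ (A (u + v)) (u + v) : ℂ).re + c * ‖u + v‖ ^ 2 := by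
  have hnorms : ‖u‖ ≠ 0 ∨ ‖v‖ ≠ 0 := hne.imp norm_ne_zero_iff.mpr norm_ne_zero_iff.mpr
  exact (quadratic_form_pos (by linarith) habc hnorms).trans_le
    (hA.isSymmetric.quadratic_lower_bound hc.le hu hv)

/-- for a bounded self-adjoint operator `A` on a complex Hilbert space,
constants `a, b, c > 0` with `a*c > b*(a+b+3c)`, vectors `u, v` with
`⟨Au,u⟩ ≥ a‖u‖²` and `‖Av‖ ≤ b‖v‖`, not both zero, one has
`Re⟨A(u+v), u+v⟩ + c‖u+v‖² > 0`. -/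
theorem stmt1 {H : Type*} [NormedAddCommGroup H] [InnerProductSpace ℂ H] [CompleteSpace H]
    (A : H →L[ℂ] H) (hA : IsSelfAdjoint A)
    (a b c : ℝ) (ha : 0 < a) (hb : 0 < b) (hc : 0 < c)
    (habc : a * c > b * (a + b + 3 * c))
    (u v : H)
    (hu : a * ‖u‖ ^ 2 ≤ (inner ℂ (A u) u : ℂ).re)
    (hv : ‖A v‖ ≤ b * ‖v‖)
    (hne : u ≠ 0 ∨ v ≠ 0) :
    0 < (inner ℂ (A (u + v)) (u + v) : ℂ).re + c * ‖u + v‖ ^ 2 :=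
  stmt1_general A hA a b c ha hc habc u v hu hv hne
end

section
/- Let T be a family of bounded self-adjoint operators T(λ) on a Hilbert space H, λ in an interval Δ ⊂ ℝ, whose forms t(λ)(x) = ⟨T(λ)x,x⟩ satisfy Assumption (A3) (monotone decreasing through zero). Let λ₁ ≤ λ₂ ≤ ⋯ ≤ λ_m be eigenvalues of T such that for each maximal group of k coinciding eigenvalues λ_i = ⋯ = λ_{i+k−1}, the kernel of T(λ_i) has dimension at least k. Then there exist linearly independent vectors u₁, …, u_m in H such that T(λⱼ)uⱼ = 0 for each j. -/
/-!
The kernels of the `T λ`, `λ ∈ Δ`, are independent subspaces; the theorem follows by picking in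
each kernel as many independent vectors as the multiplicity of the eigenvalue. Independence rests
on: a nonzero sum `x₁ + ⋯ + xₙ` with `xᵢ ∈ ker T βᵢ`, `β₁ < ⋯ < βₙ < μ`, has `t μ < 0`.
Inductively, with `w = x₁ + ⋯ + xₙ₋₁`, the form `t βₙ` is constant and negative on the line
`w + s xₙ` while `t μ → -∞` along it; so if `t μ (w + xₙ) ≥ 0`, then `t μ` vanishes somewhere on
the line, where (A3) forces `t βₙ > 0`. A vanishing sum whose top term lies in `ker T βₙ₊₁` is
then excluded because `t βₙ₊₁` vanishes on that kernel.
-/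

theorem iSupIndep.linearIndependent_sigma {ι R N : Type*} [Ring R] [AddCommGroup N]
    [Module R N] {p : ι → Submodule R N} (hp : iSupIndep p) {α : ι → Type*}
    {g : ∀ i, α i → N} (hg_mem : ∀ i a, g i a ∈ p i) (hg : ∀ i, LinearIndependent R (g i)) :
    LinearIndependent R (fun x : Σ i, α i => g x.1 x.2) := by
  classical
  rw [linearIndependent_iff']
  intro s c hs x hx
  set v : ι → N := fun i => ∑ y ∈ s with y.1 = i, c y • g y.1 y.2
  have hv_mem : ∀ i, v i ∈ p i := fun i =>
    Submodule.sum_mem _ fun y hy => (Finset.mem_filter.1 hy).2 ▸ (p y.1).smul_mem _ (hg_mem _ _)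
  have hv : v x.1 = 0 :=
    (iSupIndep_iff_finsetSum_eq_zero_imp_eq_zero p).1 hp (s.image Sigma.fst) v
      (fun i _ => hv_mem i)
      ((Finset.sum_fiberwise_of_maps_to (fun y hy => Finset.mem_image_of_mem _ hy) _).trans hs)
      x.1 (Finset.mem_image_of_mem _ hx)
  have hfiber :
      ∑ a ∈ s.preimage (Sigma.mk x.1) sigma_mk_injective.injOn, c ⟨x.1, a⟩ • g x.1 a = 0 := by
    rw [Finset.sum_preimage' (Sigma.mk x.1) s _ (fun y => c y • g y.1 y.2)]
    simpa [Set.range_sigmaMk] using hv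
  exact linearIndependent_iff'.1 (hg x.1) _ _ hfiber x.2 (by simpa using hx)

theorem Submodule.exists_linearIndependent_of_card_le_rank {R M ι : Type*} [Ring R]
    [AddCommGroup M] [Module R M] [Fintype ι] (W : Submodule R M)
    (h : (Fintype.card ι : Cardinal) ≤ Module.rank R W) :
    ∃ g : ι → M, LinearIndependent R g ∧ ∀ i, g i ∈ W := by
  obtain ⟨f, hf⟩ := exists_linearIndependent_of_le_rank h
  exact ⟨fun i => f (Fintype.equivFin ι i),
    (hf.comp _ (Fintype.equivFin ι).injective).map' W.subtype W.ker_subtype, fun i => (f _).2⟩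

section Forms

open Filter ContinuousLinearMap

variable {𝕜 H : Type*} [RCLike 𝕜] [NormedAddCommGroup H] [InnerProductSpace 𝕜 H]

local notation "⟪" x ", " y "⟫" => inner 𝕜 x y

theorem ContinuousLinearMap.reApplyInnerSelf_add_smul (A : H →L[𝕜] H) (w y : H) (s : ℝ) :
    A.reApplyInnerSelf (w + (s : 𝕜) • y) = A.reApplyInnerSelf w
      + s * (RCLike.re ⟪A y, w⟫ + RCLike.re ⟪A w, y⟫) + s ^ 2 * A.reApplyInnerSelf y := by
  simp only [reApplyInnerSelf_apply, map_add, map_smul, inner_add_left, inner_add_right,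
    inner_smul_left, inner_smul_right, RCLike.conj_ofReal, map_add, RCLike.re_ofReal_mul]
  ring

theorem ContinuousLinearMap.reApplyInnerSelf_add_of_apply_eq_zero {A : H →L[𝕜] H}
    (hA : (A : H →ₗ[𝕜] H).IsSymmetric) {y : H} (hy : A y = 0) (w : H) :
    A.reApplyInnerSelf (w + y) = A.reApplyInnerSelf w := by
  have hAwy : ⟪A w, y⟫ = 0 := by rw [← coe_coe, hA w y, coe_coe, hy, inner_zero_right]
  simp [reApplyInnerSelf_apply, inner_add_right, hy, hAwy]

theorem ContinuousLinearMap.tendsto_reApplyInnerSelf_add_smul_atBot (A : H →L[𝕜] H) (w : H)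
    {y : H} (hy : A.reApplyInnerSelf y < 0) :
    Tendsto (fun s : ℝ => A.reApplyInnerSelf (w + (s : 𝕜) • y)) atTop atBot := by
  simp only [reApplyInnerSelf_add_smul]
  set b := RCLike.re ⟪A y, w⟫ + RCLike.re ⟪A w, y⟫
  have h : Tendsto (fun s : ℝ => s * (b + A.reApplyInnerSelf y * s)) atTop atBot :=
    tendsto_id.atTop_mul_atBot₀
      (tendsto_atBot_add_const_left _ b (tendsto_id.const_mul_atTop_of_neg hy))
  refine (tendsto_atBot_add_const_left _ (A.reApplyInnerSelf w) h).congr fun s => ?_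
  ring

end Forms

section MonotoneFamily

open ContinuousLinearMap

variable {H : Type*} [NormedAddCommGroup H] [InnerProductSpace ℂ H] [CompleteSpace H]
  {Δ : Set ℝ} {T : ℝ → H →L[ℂ] H} (hsa : ∀ lam ∈ Δ, IsSelfAdjoint (T lam))
  (hA3 : ∀ x : H, x ≠ 0 → ∀ lam₀ ∈ Δ, (T lam₀).reApplyInnerSelf x = 0 →
    ∀ lam ∈ Δ, (lam < lam₀ → 0 < (T lam).reApplyInnerSelf x) ∧
      (lam₀ < lam → (T lam).reApplyInnerSelf x < 0))
include hsa hA3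

theorem reApplyInnerSelf_add_neg_of_lt {β μ : ℝ} (hβ : β ∈ Δ) (hμ : μ ∈ Δ) (hβμ : β < μ)
    {w y : H} (hy : T β y = 0) (hy0 : y ≠ 0) (hw : (T β).reApplyInnerSelf w < 0) :
    (T μ).reApplyInnerSelf (w + y) < 0 := by
  have hβ_const :
      ∀ s : ℝ, (T β).reApplyInnerSelf (w + (s : ℂ) • y) = (T β).reApplyInnerSelf w :=
    fun s => reApplyInnerSelf_add_of_apply_eq_zero (hsa β hβ).isSymmetric
      (by rw [map_smul, hy, smul_zero]) w
  have hμy : (T μ).reApplyInnerSelf y < 0 :=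
    (hA3 y hy0 β hβ (by simp [reApplyInnerSelf_apply, hy]) μ hμ).2 hβμ
  by_contra! h
  obtain ⟨s, -, hs⟩ := intermediate_value_Ici' (a := 1)
    ((T μ).reApplyInnerSelf_continuous.comp (by fun_prop)).continuousOn
    ((T μ).tendsto_reApplyInnerSelf_add_smul_atBot w hμy)
    (show (0 : ℝ) ∈ Set.Iic _ by simpa using h)
  have hv0 : w + (s : ℂ) • y ≠ 0 := fun h0 =>
    hw.ne (by rw [← hβ_const s, h0]; simp [reApplyInnerSelf_apply])
  have := (hA3 _ hv0 μ hμ hs β hβ).1 hβμ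
  linarith [hβ_const s]

theorem reApplyInnerSelf_sum_neg (s : Finset Δ) {x : Δ → H} (hx : ∀ v ∈ s, T v (x v) = 0)
    {μ : Δ} (hμ : ∀ v ∈ s, v < μ) (hne : ∑ v ∈ s, x v ≠ 0) :
    (T μ).reApplyInnerSelf (∑ v ∈ s, x v) < 0 := by
  induction s using Finset.induction_on_max generalizing μ with
  | empty => simp at hne
  | insert β S hβS IH =>
    rw [Finset.forall_mem_insert] at hx hμ
    rw [Finset.sum_insert fun h => (hβS β h).false] at hne ⊢
    by_cases hy0 : x β = 0
    · rw [hy0, zero_add] at hne ⊢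
      exact IH hx.2 hμ.2 hne
    by_cases hw0 : ∑ v ∈ S, x v = 0
    · rw [hw0, add_zero]
      exact (hA3 _ hy0 β β.2 (by simp [reApplyInnerSelf_apply, hx.1]) μ μ.2).2 hμ.1
    rw [add_comm]
    exact reApplyInnerSelf_add_neg_of_lt hsa hA3 β.2 μ.2 hμ.1 hx.1 hy0 (IH hx.2 hβS hw0)

theorem iSupIndep_ker : iSupIndep fun v : Δ => LinearMap.ker (T v : H →ₗ[ℂ] H) := by
  rw [iSupIndep_iff_finsetSum_eq_zero_imp_eq_zero]
  intro s
  induction s using Finset.induction_on_max with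
  | empty => simp
  | insert β S hβS IH =>
    intro x hx hsum
    simp only [Finset.forall_mem_insert, LinearMap.mem_ker, coe_coe] at hx ⊢
    rw [Finset.sum_insert fun h => (hβS β h).false] at hsum
    have hS : ∑ v ∈ S, x v = 0 := by
      by_contra hne
      have hβ : T β (∑ v ∈ S, x v) = 0 := by
        rw [eq_neg_of_add_eq_zero_right hsum, map_neg, hx.1, neg_zero]
      exact (reApplyInnerSelf_sum_neg hsa hA3 S hx.2 hβS hne).ne
        (by simp [reApplyInnerSelf_apply, hβ])
    rw [hS, add_zero] at hsum
    exact ⟨hsum, IH x (fun v hv => hx.2 v hv) hS⟩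

end MonotoneFamily

theorem stmt7_general {H : Type*} [NormedAddCommGroup H] [InnerProductSpace ℂ H] [CompleteSpace H]
    (Δ : Set ℝ)
    (T : ℝ → (H →L[ℂ] H)) (hsa : ∀ lam ∈ Δ, IsSelfAdjoint (T lam))
    (hA3 : ∀ x : H, x ≠ 0 → ∀ lam₀ ∈ Δ, (inner ℂ (T lam₀ x) x : ℂ).re = 0 →
      ∀ lam ∈ Δ, (lam < lam₀ → 0 < (inner ℂ (T lam x) x : ℂ).re) ∧
        (lam₀ < lam → (inner ℂ (T lam x) x : ℂ).re < 0))
    (m : ℕ) (lam : Fin m → ℝ) (hlamΔ : ∀ j, lam j ∈ Δ)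
    (hker : ∀ i : Fin m,
      ((Finset.univ.filter (fun j : Fin m => lam j = lam i)).card : Cardinal) ≤
        Module.rank ℂ (LinearMap.ker (T (lam i) : H →ₗ[ℂ] H))) :
    ∃ u : Fin m → H, LinearIndependent ℂ u ∧ ∀ j, T (lam j) (u j) = 0 := by
  classical
  let f : Fin m → Δ := fun j => ⟨lam j, hlamΔ j⟩
  have hcard : ∀ v : Δ, (Fintype.card {j // f j = v} : Cardinal) ≤
      Module.rank ℂ (LinearMap.ker (T v : H →ₗ[ℂ] H)) := by
    intro v
    by_cases hv : ∃ i, f i = v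
    · obtain ⟨i, rfl⟩ := hv
      simpa [f, Fintype.card_subtype, Subtype.ext_iff] using hker i
    · have : IsEmpty {j // f j = v} := ⟨fun j => hv ⟨j.1, j.2⟩⟩
      simp
  choose g hg_ind hg_mem using fun v : Δ =>
    (LinearMap.ker (T v : H →ₗ[ℂ] H)).exists_linearIndependent_of_card_le_rank (hcard v)
  refine ⟨fun j => g (f j) ⟨j, rfl⟩, ?_, fun j => hg_mem (f j) ⟨j, rfl⟩⟩
  exact ((iSupIndep_ker hsa hA3).linearIndependent_sigma hg_mem hg_ind).comp _
    (Equiv.sigmaFiberEquiv f).symm.injective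

/-- Lemma 2.13: if `T(λ)` are bounded self-adjoint operators satisfying
Assumption (A3) and `λ₁ ≤ ⋯ ≤ λ_m` are eigenvalues such that for each group of `k`
coinciding eigenvalues the kernel of the corresponding operator has dimension at
least `k`, then there are linearly independent eigenvectors `u₁, …, u_m`. -/
theorem stmt7 {H : Type*} [NormedAddCommGroup H] [InnerProductSpace ℂ H] [CompleteSpace H]
    (Δ : Set ℝ) (hΔ : Δ.OrdConnected)
    (T : ℝ → (H →L[ℂ] H)) (hsa : ∀ lam ∈ Δ, IsSelfAdjoint (T lam))
    (hA3 : ∀ x : H, x ≠ 0 → ∀ lam₀ ∈ Δ, (inner ℂ (T lam₀ x) x : ℂ).re = 0 →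
      ∀ lam ∈ Δ, (lam < lam₀ → 0 < (inner ℂ (T lam x) x : ℂ).re) ∧
        (lam₀ < lam → (inner ℂ (T lam x) x : ℂ).re < 0))
    (m : ℕ) (lam : Fin m → ℝ) (hmono : Monotone lam) (hlamΔ : ∀ j, lam j ∈ Δ)
    (heig : ∀ j, ∃ x : H, x ≠ 0 ∧ T (lam j) x = 0)
    (hker : ∀ i : Fin m,
      ((Finset.univ.filter (fun j : Fin m => lam j = lam i)).card : Cardinal) ≤
        Module.rank ℂ (LinearMap.ker (T (lam i) : H →ₗ[ℂ] H))) :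
    ∃ u : Fin m → H, LinearIndependent ℂ u ∧ ∀ j, T (lam j) (u j) = 0 :=
  stmt7_general Δ T hsa hA3 m lam hlamΔ hker
end

section
/- Let A be a bounded self-adjoint operator on a Hilbert space H with 0 ∈ ρ(A) (A invertible). Let K₊ be the spectral subspace of A for (0, ∞) and K₋ the spectral subspace for (−∞, 0). Let M ⊆ H be a subspace such that ⟨Ax, x⟩ ≥ 0 for all x ∈ M, and suppose M is maximal with this property. Then the orthogonal projection P₊ of H onto K₊ restricted to M is a bijection from M onto K₊ (after closure); in particular, any A-non-negative subspace M′ of H is isomorphic (via P₊) to a subspace of K₊. -/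
/-!
Injectivity: a vector of `M ∩ K₋` has `⟨Ax, x⟩ ≥ 0` and `≤ -ε‖x‖²`, so it vanishes.

Density: let `z ∈ K₊` be orthogonal to `P₊ M`, hence to `M`, and put `w = A⁻¹ z`. Since `Aw ∈ K₊`
is orthogonal to the `K₋`-component of `w`, the cross terms of `⟨Aw, w⟩` cancel against the
`K₋`-part and `⟨Aw, w⟩ ≥ ε‖w‖²`. As `w` is `A`-orthogonal to `M`, the subspace `M + ℂw` is still
`A`-non-negative, so maximality gives `w ∈ M`; then `⟨Aw, w⟩ = 0`, whence `w = 0` and `z = 0`.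
-/

open Submodule

open scoped InnerProductSpace

section

variable {𝕜 H : Type*} [RCLike 𝕜] [NormedAddCommGroup H] [InnerProductSpace 𝕜 H]

theorem eq_zero_of_mul_norm_sq_nonpos {ε : ℝ} {x : H} (hε : 0 < ε) (h : ε * ‖x‖ ^ 2 ≤ 0) :
    x = 0 := by
  by_contra hx
  have : 0 < ε * ‖x‖ ^ 2 := by positivity
  linarith

namespace LinearMap

variable {T : H →ₗ[𝕜] H}

def IsNonnegOn (T : H →ₗ[𝕜] H) (M : Submodule 𝕜 H) : Prop :=
  ∀ x ∈ M, 0 ≤ RCLike.re ⟪T x, x⟫_𝕜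

theorem IsSymmetric.re_inner_map_add_add_self (hT : T.IsSymmetric) (u v : H) :
    RCLike.re ⟪T (u + v), u + v⟫_𝕜 =
      RCLike.re ⟪T u, u⟫_𝕜 + 2 * RCLike.re ⟪T u, v⟫_𝕜 + RCLike.re ⟪T v, v⟫_𝕜 := by
  have : RCLike.re ⟪T v, u⟫_𝕜 = RCLike.re ⟪T u, v⟫_𝕜 := by
    rw [hT v u, inner_re_symm]
  simp only [map_add, inner_add_left, inner_add_right, this]
  ring

theorem isNonnegOn_span_singleton {w : H} (hw : 0 ≤ RCLike.re ⟪T w, w⟫_𝕜) :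
    T.IsNonnegOn (𝕜 ∙ w) := by
  rintro _ hx
  obtain ⟨c, rfl⟩ := mem_span_singleton.mp hx
  rw [map_smul, inner_smul_left, inner_smul_right, ← mul_assoc, RCLike.conj_mul,
    ← RCLike.ofReal_pow, RCLike.re_ofReal_mul]
  positivity

theorem IsNonnegOn.sup (hT : T.IsSymmetric) {M N : Submodule 𝕜 H} (hM : T.IsNonnegOn M)
    (hN : T.IsNonnegOn N) (hMN : ∀ x ∈ M, ∀ y ∈ N, ⟪T x, y⟫_𝕜 = 0) :
    T.IsNonnegOn (M ⊔ N) := by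
  rintro _ hz
  obtain ⟨x, hx, y, hy, rfl⟩ := mem_sup.mp hz
  rw [hT.re_inner_map_add_add_self, hMN x hx y hy, map_zero, mul_zero, add_zero]
  exact add_nonneg (hM x hx) (hN y hy)

theorem IsNonnegOn.mem_of_maximal (hT : T.IsSymmetric) {M : Submodule 𝕜 H}
    (hM : T.IsNonnegOn M) (hMmax : ∀ M', T.IsNonnegOn M' → M ≤ M' → M' = M) {w : H}
    (hw : 0 ≤ RCLike.re ⟪T w, w⟫_𝕜) (hwM : ∀ x ∈ M, ⟪T x, w⟫_𝕜 = 0) : w ∈ M := by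
  have hsup : T.IsNonnegOn (M ⊔ 𝕜 ∙ w) := by
    refine hM.sup hT (isNonnegOn_span_singleton hw) fun x hx y hy => ?_
    obtain ⟨c, rfl⟩ := mem_span_singleton.mp hy
    rw [inner_smul_right, hwM x hx, mul_zero]
  rw [← hMmax _ hsup le_sup_left]
  exact mem_sup_right (mem_span_singleton_self w)

section Definite

variable {K : Submodule 𝕜 H} [K.HasOrthogonalProjection] {ε : ℝ}

theorem IsNonnegOn.injOn_starProjection (hε : 0 < ε)
    (hneg : ∀ x ∈ Kᗮ, RCLike.re ⟪T x, x⟫_𝕜 ≤ -ε * ‖x‖ ^ 2) {M : Submodule 𝕜 H}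
    (hM : T.IsNonnegOn M) : Set.InjOn K.starProjection M := by
  intro x hx y hy hxy
  have hsub : x - y ∈ Kᗮ := by
    rw [← starProjection_apply_eq_zero_iff, map_sub, hxy, sub_self]
  refine sub_eq_zero.mp (eq_zero_of_mul_norm_sq_nonpos hε ?_)
  linarith [hneg _ hsub, hM _ (M.sub_mem hx hy)]

theorem IsSymmetric.mul_norm_sq_le_re_inner_of_apply_mem (hT : T.IsSymmetric)
    (hpos : ∀ x ∈ K, ε * ‖x‖ ^ 2 ≤ RCLike.re ⟪T x, x⟫_𝕜)
    (hneg : ∀ x ∈ Kᗮ, RCLike.re ⟪T x, x⟫_𝕜 ≤ -ε * ‖x‖ ^ 2) {w : H} (hw : T w ∈ K) :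
    ε * ‖w‖ ^ 2 ≤ RCLike.re ⟪T w, w⟫_𝕜 := by
  set wp := K.starProjection w
  set wm := w - wp
  have hwp : wp ∈ K := K.starProjection_apply_mem w
  have hwm : wm ∈ Kᗮ := K.sub_starProjection_mem_orthogonal w
  have hw_eq : w = wp + wm := (add_sub_cancel wp w).symm
  have hcross : RCLike.re ⟪T wp, wm⟫_𝕜 + RCLike.re ⟪T wm, wm⟫_𝕜 = 0 := by
    rw [← map_add, ← inner_add_left, ← map_add, ← hw_eq, hwm _ hw, map_zero]
  have hnorm : ‖w‖ ^ 2 = ‖wp‖ ^ 2 + ‖wm‖ ^ 2 := by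
    rw [hw_eq, norm_add_sq (𝕜 := 𝕜), hwm _ hwp, map_zero, mul_zero, add_zero]
  rw [hw_eq, hT.re_inner_map_add_add_self, ← hw_eq, hnorm]
  linarith [hpos _ hwp, hneg _ hwm]

theorem IsNonnegOn.eq_zero_of_apply_mem_orthogonal (hT : T.IsSymmetric) (hε : 0 < ε)
    (hpos : ∀ x ∈ K, ε * ‖x‖ ^ 2 ≤ RCLike.re ⟪T x, x⟫_𝕜)
    (hneg : ∀ x ∈ Kᗮ, RCLike.re ⟪T x, x⟫_𝕜 ≤ -ε * ‖x‖ ^ 2) {M : Submodule 𝕜 H}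
    (hM : T.IsNonnegOn M) (hMmax : ∀ M', T.IsNonnegOn M' → M ≤ M' → M' = M) {w : H}
    (hwK : T w ∈ K) (hwM : T w ∈ Mᗮ) : w = 0 := by
  have hw_pos := hT.mul_norm_sq_le_re_inner_of_apply_mem hpos hneg hwK
  have hMw : ∀ x ∈ M, ⟪T x, w⟫_𝕜 = 0 := fun x hx => by rw [hT x w]; exact hwM x hx
  have hw_mem : w ∈ M := hM.mem_of_maximal hT hMmax (hw_pos.trans' (by positivity)) hMw
  refine eq_zero_of_mul_norm_sq_nonpos hε ?_
  rwa [hMw w hw_mem, map_zero] at hw_pos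

end Definite

end LinearMap

theorem Submodule.closure_image_starProjection_eq [CompleteSpace H] {K : Submodule 𝕜 H}
    [K.HasOrthogonalProjection] {M : Submodule 𝕜 H} (hM : ∀ z ∈ K, z ∈ Mᗮ → z = 0) :
    closure (K.starProjection '' M) = K := by
  set N := M.map (K.starProjection : H →ₗ[𝕜] H)
  have hNK : N ≤ K := by
    rintro _ ⟨x, -, rfl⟩
    exact K.starProjection_apply_mem x
  have hN_orth : Nᗮ = Kᗮ := by
    refine le_antisymm (fun z hz => ?_) (orthogonal_le hNK)
    refine (starProjection_apply_eq_zero_iff (K := K)).mp (hM _ (K.starProjection_apply_mem z) ?_)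
    intro x hx
    rw [← inner_starProjection_left_eq_right]
    exact hz _ ⟨x, hx, rfl⟩
  change closure (N : Set H) = K
  rw [← topologicalClosure_coe, ← orthogonal_orthogonal_eq_closure,
    hN_orth, orthogonal_orthogonal]

end

/-- angular operator representation: let `A` be a bounded self-adjoint
invertible operator, `Kp = K₊`, `Kpᗮ = K₋` its spectral subspaces for `(0,∞)` and
`(−∞,0)` (encoded by: `A` is uniformly positive on `K₊` and uniformly negative on
`K₋ = K₊ᗮ`, which holds since `0 ∈ ρ(A)`).  If `M` is a maximal `A`-non-negative
subspace, then the orthogonal projection `P₊` onto `K₊` is injective on `M` and maps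
`M` onto a dense subspace of `K₊` (onto `K₊` after closure); and `P₊` is injective on
every `A`-non-negative subspace `M′`. -/
theorem stmt9 {H : Type*} [NormedAddCommGroup H] [InnerProductSpace ℂ H] [CompleteSpace H]
    (A : H →L[ℂ] H) (hA : IsSelfAdjoint A) (hAinv : IsUnit A)
    (Kp : Submodule ℂ H) [HasOrthogonalProjection Kp]
    (ε : ℝ) (hε : 0 < ε)
    (hpos : ∀ x ∈ Kp, ε * ‖x‖ ^ 2 ≤ (inner ℂ (A x) x : ℂ).re)
    (hneg : ∀ x ∈ Kpᗮ, (inner ℂ (A x) x : ℂ).re ≤ -ε * ‖x‖ ^ 2)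
    (M : Submodule ℂ H)
    (hMnonneg : ∀ x ∈ M, 0 ≤ (inner ℂ (A x) x : ℂ).re)
    (hMmax : ∀ M' : Submodule ℂ H, (∀ x ∈ M', 0 ≤ (inner ℂ (A x) x : ℂ).re) →
      M ≤ M' → M' = M) :
    Set.InjOn (fun x : H => ((orthogonalProjection Kp x : H))) M ∧
    closure ((fun x : H => ((orthogonalProjection Kp x : H))) '' M) = (Kp : Set H) ∧
    (∀ M' : Submodule ℂ H, (∀ x ∈ M', 0 ≤ (inner ℂ (A x) x : ℂ).re) →
      Set.InjOn (fun x : H => ((orthogonalProjection Kp x : H))) M') := by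
  have hinj (M' : Submodule ℂ H) (hM' : (A : H →ₗ[ℂ] H).IsNonnegOn M') :
      Set.InjOn Kp.starProjection M' :=
    hM'.injOn_starProjection hε hneg
  refine ⟨hinj M hMnonneg, Submodule.closure_image_starProjection_eq fun z hzK hzM => ?_, hinj⟩
  obtain ⟨w, rfl⟩ : ∃ w, A w = z :=
    ⟨(↑hAinv.unit⁻¹ : H →L[ℂ] H) z, DFunLike.congr_fun hAinv.mul_val_inv z⟩
  rw [LinearMap.IsNonnegOn.eq_zero_of_apply_mem_orthogonal hA.isSymmetric hε hpos hneg hMnonneg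
    hMmax hzK hzM, map_zero]
end

section
/- Let A be a bounded self-adjoint invertible operator on a Hilbert space H. Let M be a maximal A-non-negative subspace of H (i.e. ⟨Ax,x⟩ ≥ 0 on M, and M is maximal with this property), let M′ be any A-non-negative subspace, and let L ⊆ M ∩ M′ be a subspace. Then dim(M/L) ≥ dim(M′/L) (as cardinals, or in the finite-codimension sense). -/
/-!
Let `P` be the spectral projection of `A` onto its positive part. Since `0 ∉ σ(A)`, `A` is
uniformly positive on `ran P` and uniformly negative on `ker P`, so on an `A`-non-negative
subspace the component `x - P x` is controlled by `P x`: there `P` is injective with closed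
range. For a maximal `M`, `P(M)` is all of `ran P`, since a nonzero vector of `ran P` that is
`A`-orthogonal to `M` could be adjoined to `M`. Hence `P` embeds `M'` into `M` fixing `L`.
-/

open scoped InnerProductSpace

namespace Submodule

universe u
variable {R : Type*} {V W : Type u} [Ring R] [AddCommGroup V] [Module R V]
  [AddCommGroup W] [Module R W]

theorem rank_quotient_comap_le (φ : V →ₗ[R] W) (q : Submodule R W) :
    Module.rank R (V ⧸ q.comap φ) ≤ Module.rank R (W ⧸ q) :=
  LinearMap.rank_le_of_injective (mapQ _ q φ le_rfl)
    (LinearMap.ker_eq_bot.mp (by simp [ker_mapQ]))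

theorem rank_quotient_le_of_map_le (f : V →ₗ[R] W) {M M' L : Submodule R V}
    (hLM : L ≤ M) (hLM' : L ≤ M') (hM : Set.InjOn f M) (hM' : Set.InjOn f M')
    (h : M'.map f ≤ M.map f) :
    Module.rank R (M' ⧸ L.comap M'.subtype) ≤ Module.rank R (M ⧸ L.comap M.subtype) := by
  let e := LinearEquiv.ofInjective (f ∘ₗ M.subtype) fun a b hab => Subtype.ext (hM a.2 b.2 hab)
  let g : M' →ₗ[R] LinearMap.range (f ∘ₗ M.subtype) :=
    (f ∘ₗ M'.subtype).codRestrict _ fun y => by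
      simpa [LinearMap.range_comp] using h (mem_map_of_mem y.2)
  let φ : M' →ₗ[R] M := e.symm ∘ₗ g
  have hφ (y : M') : f (φ y) = f y := congrArg Subtype.val (e.apply_symm_apply (g y))
  have hcomap : (L.comap M.subtype).comap φ = L.comap M'.subtype := by
    ext y
    simp only [mem_comap, subtype_apply]
    constructor
    · intro hy
      rwa [← hM' (hLM' hy) y.2 (hφ y)]
    · intro hy
      rwa [hM (φ y).2 (hLM hy) (hφ y)]
  rw [← hcomap]
  exact rank_quotient_comap_le φ _

end Submodule

theorem exists_pos_le_abs_of_mem_spectrum {B : Type*} [NormedRing B] [NormedAlgebra ℝ B]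
    [CompleteSpace B] {a : B} (ha : IsUnit a) : ∃ ε > 0, ∀ x ∈ spectrum ℝ a, ε ≤ |x| := by
  obtain ⟨ε, hε, hball⟩ := Metric.isOpen_iff.mp (spectrum.isClosed (𝕜 := ℝ) a).isOpen_compl 0
    (spectrum.zero_notMem ℝ ha)
  refine ⟨ε, hε, fun x hx => ?_⟩
  by_contra! h
  exact hball (by simpa using h) hx

theorem continuousOn_ite_pos {s : Set ℝ} (hs : (0 : ℝ) ∉ s) :
    ContinuousOn (fun x : ℝ => if 0 < x then (1 : ℝ) else 0) s := by
  refine continuousOn_const.if (fun x hx => ?_) continuousOn_const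
  have hx0 : x ∈ frontier (Set.Ioi (0 : ℝ)) := hx.2
  rw [frontier_Ioi, Set.mem_singleton_iff] at hx0
  exact absurd (hx0 ▸ hx.1) hs

section

variable {H : Type*} [NormedAddCommGroup H] [InnerProductSpace ℂ H]

def IsNonnegFor (A : H →L[ℂ] H) (N : Submodule ℂ H) : Prop :=
  ∀ x ∈ N, 0 ≤ (⟪A x, x⟫_ℂ).re

namespace IsNonnegFor

variable {A : H →L[ℂ] H} {M N : Submodule ℂ H}

theorem topologicalClosure (hN : IsNonnegFor A N) : IsNonnegFor A N.topologicalClosure :=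
  fun _ hx => closure_minimal hN (isClosed_le (g := fun x : H => (⟪A x, x⟫_ℂ).re)
    continuous_const (by fun_prop)) hx

theorem isClosed_of_maximal (hM : Maximal (IsNonnegFor A) M) : IsClosed (M : Set H) :=
  isClosed_of_closure_subset fun _ hx => hM.2 hM.1.topologicalClosure M.le_topologicalClosure hx

theorem sup_span_singleton (hA : (A : H →ₗ[ℂ] H).IsSymmetric) (hN : IsNonnegFor A N) {u : H}
    (hu : 0 ≤ (⟪A u, u⟫_ℂ).re) (horth : ∀ x ∈ N, ⟪A u, x⟫_ℂ = 0) :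
    IsNonnegFor A (N ⊔ ℂ ∙ u) := by
  intro x hx
  obtain ⟨m, hm, _, hs, rfl⟩ := Submodule.mem_sup.mp hx
  obtain ⟨c, rfl⟩ := Submodule.mem_span_singleton.mp hs
  have h₁ : ⟪A (c • u), m⟫_ℂ = 0 := by rw [map_smul, inner_smul_left, horth m hm, mul_zero]
  have h₂ : ⟪A m, c • u⟫_ℂ = 0 := by
    rw [← ContinuousLinearMap.coe_coe, hA, ← inner_conj_symm, ContinuousLinearMap.coe_coe, h₁,
      map_zero]
  have h₃ : ⟪A (c • u), c • u⟫_ℂ = (‖c‖ ^ 2 : ℝ) * ⟪A u, u⟫_ℂ := by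
    rw [map_smul, inner_smul_left, inner_smul_right, ← mul_assoc, RCLike.conj_mul]
    norm_cast
  have hexp : ⟪A (m + c • u), m + c • u⟫_ℂ = ⟪A m, m⟫_ℂ + ⟪A (c • u), c • u⟫_ℂ := by
    rw [map_add, inner_add_left, inner_add_right, inner_add_right, h₁, h₂]
    ring
  rw [hexp, Complex.add_re, h₃, Complex.re_ofReal_mul]
  exact add_nonneg (hN m hm) (mul_nonneg (sq_nonneg _) hu)

theorem mem_of_maximal (hA : (A : H →ₗ[ℂ] H).IsSymmetric) (hM : Maximal (IsNonnegFor A) M)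
    {u : H} (hu : 0 ≤ (⟪A u, u⟫_ℂ).re) (horth : ∀ x ∈ M, ⟪A u, x⟫_ℂ = 0) : u ∈ M :=
  hM.2 (hM.1.sup_span_singleton hA hu horth) le_sup_left
    (Submodule.mem_sup_right (Submodule.mem_span_singleton_self u))

end IsNonnegFor

variable [CompleteSpace H]

/-- `P` plays the role of the spectral projection `E((0,∞))` of `A`, with `ε` a spectral gap
of `A` around `0`. -/
structure IsDefiniteSplitting (A P : H →L[ℂ] H) (ε : ℝ) : Prop where
  pos : 0 < ε
  isStarProjection : IsStarProjection P
  commute : Commute A P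
  le_re_inner : ∀ u, P u = u → ε * ‖u‖ ^ 2 ≤ (⟪A u, u⟫_ℂ).re
  re_inner_le : ∀ u, P u = 0 → (⟪A u, u⟫_ℂ).re ≤ -(ε * ‖u‖ ^ 2)

namespace IsDefiniteSplitting

variable {A P : H →L[ℂ] H} {ε : ℝ} (hP : IsDefiniteSplitting A P ε)
include hP

theorem apply_apply (x : H) : P (P x) = P x :=
  congr($(hP.isStarProjection.isIdempotentElem.eq) x)

theorem apply_sub_apply (x : H) : P (x - P x) = 0 := by
  rw [map_sub, hP.apply_apply, sub_self]

theorem inner_apply_left (x y : H) : ⟪P x, y⟫_ℂ = ⟪x, P y⟫_ℂ :=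
  hP.isStarProjection.isSelfAdjoint.isSymmetric x y

theorem apply_comm (x : H) : A (P x) = P (A x) :=
  congr($(hP.commute.eq) x)

theorem re_inner_apply_self (x : H) :
    (⟪A x, x⟫_ℂ).re = (⟪A (P x), P x⟫_ℂ).re + (⟪A (x - P x), x - P x⟫_ℂ).re := by
  have h₁ : ⟪A (P x), x - P x⟫_ℂ = 0 := by
    rw [hP.apply_comm, hP.inner_apply_left, hP.apply_sub_apply, inner_zero_right]
  have h₂ : ⟪A (x - P x), P x⟫_ℂ = 0 := by
    rw [← hP.inner_apply_left, ← hP.apply_comm, hP.apply_sub_apply, map_zero, inner_zero_left]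
  conv_lhs => rw [← add_sub_cancel (P x) x]
  rw [map_add, inner_add_left, inner_add_right, inner_add_right, h₁, h₂, add_zero, zero_add,
    Complex.add_re]

theorem norm_sub_apply_sq_le {x : H} (hx : 0 ≤ (⟪A x, x⟫_ℂ).re) :
    ε * ‖x - P x‖ ^ 2 ≤ ‖A‖ * ‖P x‖ ^ 2 := by
  have hneg := hP.re_inner_le _ (hP.apply_sub_apply x)
  have hle : (⟪A (P x), P x⟫_ℂ).re ≤ ‖A‖ * ‖P x‖ ^ 2 := by
    calc (⟪A (P x), P x⟫_ℂ).re ≤ ‖A (P x)‖ * ‖P x‖ := re_inner_le_norm (𝕜 := ℂ) _ _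
      _ ≤ ‖A‖ * ‖P x‖ * ‖P x‖ := by gcongr; exact A.le_opNorm _
      _ = ‖A‖ * ‖P x‖ ^ 2 := by ring
  linarith [hP.re_inner_apply_self x]

theorem norm_le_mul_norm_apply {x : H} (hx : 0 ≤ (⟪A x, x⟫_ℂ).re) :
    ‖x‖ ≤ (1 + ‖A‖ / ε) * ‖P x‖ := by
  have hpyth : ‖x‖ ^ 2 = ‖P x‖ ^ 2 + ‖x - P x‖ ^ 2 := by
    have h := norm_add_sq_eq_norm_sq_add_norm_sq_of_inner_eq_zero (𝕜 := ℂ) (P x) (x - P x)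
      (by rw [hP.inner_apply_left, hP.apply_sub_apply, inner_zero_right])
    rw [add_sub_cancel] at h
    simpa only [sq] using h
  have hc : 1 ≤ 1 + ‖A‖ / ε := le_add_of_nonneg_right (by have := hP.pos; positivity)
  have hsub : ‖x - P x‖ ^ 2 ≤ ‖A‖ / ε * ‖P x‖ ^ 2 := by
    rw [div_mul_eq_mul_div, le_div_iff₀ hP.pos, mul_comm]
    exact hP.norm_sub_apply_sq_le hx
  refine le_of_sq_le_sq ?_ (by positivity)
  nlinarith [sq_nonneg ‖P x‖]

theorem injOn {N : Submodule ℂ H} (hN : IsNonnegFor A N) : Set.InjOn P N := by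
  intro x hx y hy hxy
  have hP0 : P (x - y) = 0 := by rw [map_sub, hxy, sub_self]
  have := hP.norm_le_mul_norm_apply (hN _ (N.sub_mem hx hy))
  rw [hP0, norm_zero, mul_zero] at this
  exact sub_eq_zero.mp (norm_le_zero_iff.mp this)

theorem isClosed_map {N : Submodule ℂ H} (hN : IsNonnegFor A N) (hNc : IsClosed (N : Set H)) :
    IsClosed (N.map (P : H →ₗ[ℂ] H) : Set H) := by
  have := hNc.completeSpace_coe
  let F : N →L[ℂ] H := P.comp N.subtypeL
  have hF : AntilipschitzWith (1 + ‖A‖ / ε).toNNReal F :=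
    AddMonoidHomClass.antilipschitz_of_bound F fun x => by
      rw [Real.coe_toNNReal _ (by have := hP.pos; positivity)]
      exact hP.norm_le_mul_norm_apply (hN x x.2)
  have hrange : (N.map (P : H →ₗ[ℂ] H) : Set H) = Set.range F := by
    ext y
    simp [F]
  rw [hrange]
  exact hF.isClosed_range F.uniformContinuous

theorem map_eq_range_of_maximal (hA : IsSelfAdjoint A) (hAsurj : Function.Surjective A)
    {M : Submodule ℂ H} (hM : Maximal (IsNonnegFor A) M) :
    M.map (P : H →ₗ[ℂ] H) = LinearMap.range (P : H →ₗ[ℂ] H) := by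
  set D := M.map (P : H →ₗ[ℂ] H)
  have : CompleteSpace D :=
    (hP.isClosed_map hM.1 (IsNonnegFor.isClosed_of_maximal hM)).completeSpace_coe
  have hDle : D ≤ LinearMap.range (P : H →ₗ[ℂ] H) := LinearMap.map_le_range
  refine hDle.antisymm ?_
  by_contra hne
  obtain ⟨z, ⟨hzD, hzP⟩, hz0⟩ : ∃ z ∈ Dᗮ ⊓ LinearMap.range (P : H →ₗ[ℂ] H), z ≠ 0 := by
    by_contra! h
    apply hne
    rw [← Submodule.sup_orthogonal_inf_of_hasOrthogonalProjection hDle,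
      (Submodule.eq_bot_iff _).mpr h, sup_bot_eq]
  obtain ⟨y, rfl⟩ := hAsurj z
  have hPz : P (A y) = A y := by
    obtain ⟨w, hw⟩ := hzP
    rw [← hw]
    exact hP.apply_apply w
  have hAu : A (P y) = A y := by rw [hP.apply_comm, hPz]
  have horth : ∀ x ∈ M, ⟪A (P y), x⟫_ℂ = 0 := fun x hx => by
    rw [hAu, ← hPz, hP.inner_apply_left]
    exact Submodule.inner_left_of_mem_orthogonal (Submodule.mem_map_of_mem hx) hzD
  have hpos := hP.le_re_inner _ (hP.apply_apply y)
  have hmem := IsNonnegFor.mem_of_maximal hA.isSymmetric hM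
    (le_trans (by have := hP.pos; positivity) hpos) horth
  rw [horth _ hmem, Complex.zero_re] at hpos
  have : P y = 0 := by
    by_contra h
    linarith [mul_pos hP.pos (pow_pos (norm_pos_iff.mpr h) 2)]
  exact hz0 (by rw [← hAu, this, map_zero])

end IsDefiniteSplitting

section Spectral

variable {A : H →L[ℂ] H}

theorem re_inner_cfc_le_of_cfc_apply_eq {f g₁ g₂ : ℝ → ℝ} (hf : ContinuousOn f (spectrum ℝ A))
    (hg₁ : ContinuousOn g₁ (spectrum ℝ A)) (hg₂ : ContinuousOn g₂ (spectrum ℝ A))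
    (h : ∀ x ∈ spectrum ℝ A, g₁ x * f x ≤ g₂ x * f x) {u : H} (hu : cfc f A u = u) :
    (⟪cfc g₁ A u, u⟫_ℂ).re ≤ (⟪cfc g₂ A u, u⟫_ℂ).re := by
  have hmul (g : ℝ → ℝ) (hg : ContinuousOn g (spectrum ℝ A)) :
      cfc g A u = cfc (fun x => g x * f x) A u := by
    rw [cfc_mul g f A hg hf]
    exact (congrArg (fun v => cfc g A v) hu).symm
  have := ((ContinuousLinearMap.le_def _ _).mp (cfc_mono h)).re_inner_nonneg_left u
  rw [hmul g₁ hg₁, hmul g₂ hg₂, ← sub_nonneg]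
  simpa [inner_sub_left] using this

theorem exists_isDefiniteSplitting (hA : IsSelfAdjoint A) (hAinv : IsUnit A) :
    ∃ P ε, IsDefiniteSplitting A P ε := by
  obtain ⟨ε, hε, hgap⟩ := exists_pos_le_abs_of_mem_spectrum hAinv
  have h0 : (0 : ℝ) ∉ spectrum ℝ A := spectrum.zero_notMem ℝ hAinv
  let p : ℝ → ℝ := fun x => if 0 < x then 1 else 0
  have hp : ContinuousOn p (spectrum ℝ A) := continuousOn_ite_pos h0
  refine ⟨cfc p A, ε, hε, ⟨?_, cfc_predicate _ _⟩, ?_, fun u hu => ?_, fun u hu => ?_⟩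
  · show cfc p A * cfc p A = cfc p A
    rw [← cfc_mul p p A]
    exact cfc_congr fun x _ => by simp only [p]; split_ifs <;> norm_num
  · simpa only [cfc_id' ℝ A] using cfc_commute_cfc (fun x => x) p A
  · have := re_inner_cfc_le_of_cfc_apply_eq (g₁ := fun _ => ε) (g₂ := fun x => x) hp
      continuousOn_const continuousOn_id (fun x hx => ?_) hu
    · rw [cfc_id' ℝ A, cfc_const ε A, ContinuousLinearMap.algebraMap_apply,
        RCLike.real_smul_eq_coe_smul (K := ℂ), inner_smul_left] at this
      simpa [inner_self_eq_norm_sq_to_K, ← Complex.ofReal_pow] using this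
    · simp only [p]
      split_ifs with hx0
      · simpa [abs_of_pos hx0] using hgap x hx
      · simp
  · have hu' : cfc (fun x => 1 - p x) A u = u := by
      rw [cfc_sub (fun _ : ℝ => (1 : ℝ)) p A continuousOn_const hp, cfc_const_one ℝ A]
      simp [hu]
    have := re_inner_cfc_le_of_cfc_apply_eq (f := fun x => 1 - p x) (g₁ := fun x => x)
      (g₂ := fun _ => -ε) (continuousOn_const.sub hp) continuousOn_id continuousOn_const
      (fun x hx => ?_) hu'
    · rw [cfc_id' ℝ A, cfc_const (-ε) A, ContinuousLinearMap.algebraMap_apply,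
        RCLike.real_smul_eq_coe_smul (K := ℂ), inner_smul_left] at this
      simpa [inner_self_eq_norm_sq_to_K, ← Complex.ofReal_pow] using this
    · simp only [p]
      split_ifs with hx0
      · simp
      · have hxneg : x < 0 := (not_lt.mp hx0).lt_of_ne fun h => h0 (h ▸ hx)
        linarith [abs_of_neg hxneg ▸ hgap x hx]

end Spectral

end

/-- Lemma 2.7: let `A` be a bounded self-adjoint invertible operator on a
Hilbert space, `M` a maximal `A`-non-negative subspace, `M'` an `A`-non-negative
subspace and `L ⊆ M ∩ M'`.  Then `dim(M'/L) ≤ dim(M/L)`. -/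
theorem stmt10 {H : Type*} [NormedAddCommGroup H] [InnerProductSpace ℂ H] [CompleteSpace H]
    (A : H →L[ℂ] H) (hA : IsSelfAdjoint A) (hAinv : IsUnit A)
    (M M' L : Submodule ℂ H)
    (hMnonneg : ∀ x ∈ M, 0 ≤ (inner ℂ (A x) x : ℂ).re)
    (hMmax : ∀ N : Submodule ℂ H, (∀ x ∈ N, 0 ≤ (inner ℂ (A x) x : ℂ).re) →
      M ≤ N → N = M)
    (hM'nonneg : ∀ x ∈ M', 0 ≤ (inner ℂ (A x) x : ℂ).re)
    (hLM : L ≤ M) (hLM' : L ≤ M') :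
    Module.rank ℂ (↥M' ⧸ L.comap M'.subtype) ≤ Module.rank ℂ (↥M ⧸ L.comap M.subtype) := by
  obtain ⟨P, ε, hP⟩ := exists_isDefiniteSplitting hA hAinv
  have hM : Maximal (IsNonnegFor A) M := ⟨hMnonneg, fun N hN hMN => (hMmax N hN hMN).le⟩
  have hAsurj : Function.Surjective A := (ContinuousLinearMap.isUnit_iff_bijective.mp hAinv).2
  refine Submodule.rank_quotient_le_of_map_le (P : H →ₗ[ℂ] H) hLM hLM'
    (hP.injOn hM.1) (hP.injOn hM'nonneg) ?_
  rw [hP.map_eq_range_of_maximal hA hAsurj hM]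
  exact LinearMap.map_le_range
end

section
/- Let A be a self-adjoint operator bounded from below on a Hilbert space H with form a, and let b be a non-negative quadratic form with dom(b) ⊇ dom(a) satisfying b[x] ≤ a₀‖x‖² + b₀·a[x] for all x ∈ dom(a), with constants a₀, b₀ ≥ 0. Let α < β be real numbers with (α, β) ⊂ ρ(A), and let C be the self-adjoint operator associated with the form a + b. If α̂ := α + a₀ + b₀α < β, then (α̂, β) ⊂ ρ(C). -/
/-!
Since `(α, β)` is a gap in the spectrum of `A`, a continuous cutoff that vanishes below `α` and
equals `1` above `β` yields, through the continuous functional calculus, an orthogonal projection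
`P` such that `A ≥ β` on `ran P` and `A ≤ α` on `ker P`.  For `α̂ < λ < β`, the
form of `C - λ = A + b - λ` is then uniformly positive on `ran P` (because `b ≥ 0`) and uniformly
negative on `ker P` (because `b ≤ a₀ + b₀ a ≤ a₀ + b₀ α` there).  Twisting by the self-adjoint
unitary `2P - 1` turns this indefinite bound into coercivity, which gives invertibility by
Lax–Milgram.
-/

open ContinuousLinearMap RCLike

section InnerProduct

variable {𝕜 E : Type*} [RCLike 𝕜] [NormedAddCommGroup E] [InnerProductSpace 𝕜 E]

local notation "⟪" x ", " y "⟫" => inner 𝕜 x y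

lemma IsStarProjection.norm_sq_eq_add [CompleteSpace E] {P : E →L[𝕜] E}
    (hP : IsStarProjection P) (x : E) : ‖x‖ ^ 2 = ‖P x‖ ^ 2 + ‖(1 - P) x‖ ^ 2 := by
  obtain ⟨K, _, rfl⟩ := isStarProjection_iff_eq_starProjection.mp hP
  rw [← K.starProjection_orthogonal']
  exact K.norm_sq_eq_add_norm_sq_starProjection x

lemma IsSelfAdjoint.re_inner_add_sub [CompleteSpace E] {T : E →L[𝕜] E} (hT : IsSelfAdjoint T)
    (u v : E) : re ⟪T (u + v), u - v⟫ = re ⟪T u, u⟫ - re ⟪T v, v⟫ := by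
  have hsymm : ⟪T v, u⟫ = ⟪v, T u⟫ := hT.isSymmetric v u
  have hcross : re ⟪T v, u⟫ = re ⟪T u, v⟫ := by rw [hsymm, ← inner_conj_symm, conj_re]
  simp only [map_add, inner_add_left, inner_sub_right, map_sub]
  linarith

lemma re_inner_apply_nonneg_of_nonneg_mul {T Q : E →L[𝕜] E} (hQ : IsIdempotentElem Q)
    (h : 0 ≤ T * Q) (x : E) : 0 ≤ re ⟪T (Q x), Q x⟫ := by
  have hQx : Q (Q x) = Q x := DFunLike.congr_fun hQ.eq x
  simpa [hQx] using ((nonneg_iff_isPositive _).mp h).re_inner_nonneg_left (Q x)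

theorem IsSelfAdjoint.isUnit_of_re_inner_bounds [CompleteSpace E] {T P : E →L[𝕜] E}
    (hT : IsSelfAdjoint T) (hP : IsStarProjection P) {c : ℝ} (hc : 0 < c)
    (hpos : ∀ x, c * ‖P x‖ ^ 2 ≤ re ⟪T (P x), P x⟫)
    (hneg : ∀ x, re ⟪T ((1 - P) x), (1 - P) x⟫ ≤ -(c * ‖(1 - P) x‖ ^ 2)) : IsUnit T := by
  set U := 2 * P - 1 with hU_def
  have hU : U ∈ unitary (E →L[𝕜] E) := hP.two_mul_sub_one_mem_unitary
  have hcoercive : ∀ x, c * ‖x‖ ^ 2 ≤ re ⟪(star U * T) x, x⟫ := fun x ↦ by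
    have hsum : P x + (1 - P) x = x := by simp
    have hUx : U x = P x - (1 - P) x := by simp [hU_def, two_mul]; abel
    calc c * ‖x‖ ^ 2 = c * ‖P x‖ ^ 2 + c * ‖(1 - P) x‖ ^ 2 := by rw [hP.norm_sq_eq_add x]; ring
      _ ≤ re ⟪T (P x), P x⟫ - re ⟪T ((1 - P) x), (1 - P) x⟫ := by linarith [hpos x, hneg x]
      _ = re ⟪(star U * T) x, x⟫ := by
        rw [← hT.re_inner_add_sub, hsum, ← hUx, star_eq_adjoint, mul_apply_eq_comp,
          adjoint_inner_left]
  have hstarUT : IsUnit (star U * T) := by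
    refine isUnit_of_forall_le_norm_inner_map _ (c := c.toNNReal) (by simpa using hc) fun x ↦ ?_
    rw [Real.coe_toNNReal c hc.le, mul_comm]
    exact (hcoercive x).trans (re_le_norm _)
  exact (IsUnit.mul_left_iff (Unitary.isUnit_coe (U := ⟨star U, Unitary.star_mem hU⟩))).mp hstarUT

end InnerProduct

lemma exists_continuous_eq_zero_of_le_eq_one_of_ge {α β : ℝ} (hαβ : α < β) :
    ∃ f : ℝ → ℝ, Continuous f ∧ (∀ t ≤ α, f t = 0) ∧ ∀ t, β ≤ t → f t = 1 := by
  refine ⟨fun t ↦ max 0 (min 1 ((t - α) / (β - α))), by fun_prop, fun t ht ↦ ?_, fun t ht ↦ ?_⟩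
  · have : (t - α) / (β - α) ≤ 0 := div_nonpos_of_nonpos_of_nonneg (by linarith) (by linarith)
    simp [this]
  · have : 1 ≤ (t - α) / (β - α) := by rw [le_div_iff₀ (by linarith)]; linarith
    simp [this]

section SpectralGap

variable {H : Type*} [NormedAddCommGroup H] [InnerProductSpace ℂ H]

lemma re_inner_sub_algebraMap_apply_self (T : H →L[ℂ] H) (r : ℝ) (x : H) :
    (inner ℂ ((T - algebraMap ℝ (H →L[ℂ] H) r) x) x).re = (inner ℂ (T x) x).re - r * ‖x‖ ^ 2 := by
  simp [Algebra.algebraMap_eq_smul_one, ← Complex.ofReal_pow]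

theorem IsSelfAdjoint.exists_isStarProjection_of_spectrum_gap [CompleteSpace H] {A : H →L[ℂ] H}
    (hA : IsSelfAdjoint A) {α β : ℝ} (hαβ : α < β) (hgap : ∀ t ∈ spectrum ℝ A, t ≤ α ∨ β ≤ t) :
    ∃ P : H →L[ℂ] H, IsStarProjection P ∧
      0 ≤ (A - algebraMap ℝ (H →L[ℂ] H) β) * P ∧
      0 ≤ (algebraMap ℝ (H →L[ℂ] H) α - A) * (1 - P) := by
  obtain ⟨f, hf, hf0, hf1⟩ := exists_continuous_eq_zero_of_le_eq_one_of_ge hαβ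
  have hf_spec : ∀ t ∈ spectrum ℝ A, (t ≤ α ∧ f t = 0) ∨ (β ≤ t ∧ f t = 1) := fun t ht ↦
    (hgap t ht).imp (fun h ↦ ⟨h, hf0 t h⟩) (fun h ↦ ⟨h, hf1 t h⟩)
  have hupper : (A - algebraMap ℝ _ β) * cfc f A = cfc (fun t ↦ (t - β) * f t) A := by
    rw [cfc_mul (fun t ↦ t - β) f A, cfc_sub (fun t ↦ t) (fun _ ↦ β) A, cfc_id' ℝ A,
      cfc_const β A]
  have hlower : (algebraMap ℝ _ α - A) * (1 - cfc f A) =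
      cfc (fun t ↦ (α - t) * (1 - f t)) A := by
    rw [cfc_mul (fun t ↦ α - t) (fun t ↦ 1 - f t) A, cfc_sub (fun _ ↦ α) (fun t ↦ t) A,
      cfc_sub (fun _ ↦ 1) f A, cfc_id' ℝ A, cfc_const α A, cfc_const_one ℝ A]
  refine ⟨cfc f A, ⟨?_, cfc_predicate f A⟩, hupper ▸ cfc_nonneg fun t ht ↦ ?_,
    hlower ▸ cfc_nonneg fun t ht ↦ ?_⟩
  · rw [IsIdempotentElem, ← cfc_mul f f A]
    refine cfc_congr fun t ht ↦ ?_
    rcases hf_spec t ht with ⟨-, h⟩ | ⟨-, h⟩ <;> simp [h]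
  · rcases hf_spec t ht with ⟨-, h⟩ | ⟨h, h'⟩ <;> simp [*]
  · rcases hf_spec t ht with ⟨h, h'⟩ | ⟨-, h⟩ <;> simp [*]

theorem IsSelfAdjoint.exists_isStarProjection_forall_re_inner_of_spectrum_gap [CompleteSpace H]
    {A : H →L[ℂ] H} (hA : IsSelfAdjoint A) {α β : ℝ} (hαβ : α < β)
    (hgap : ∀ t ∈ spectrum ℝ A, t ≤ α ∨ β ≤ t) :
    ∃ P : H →L[ℂ] H, IsStarProjection P ∧
      (∀ x, β * ‖P x‖ ^ 2 ≤ (inner ℂ (A (P x)) (P x)).re) ∧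
      ∀ x, (inner ℂ (A ((1 - P) x)) ((1 - P) x)).re ≤ α * ‖(1 - P) x‖ ^ 2 := by
  obtain ⟨P, hP, hupper, hlower⟩ := hA.exists_isStarProjection_of_spectrum_gap hαβ hgap
  refine ⟨P, hP, fun x ↦ ?_, fun x ↦ ?_⟩
  · have h := re_inner_apply_nonneg_of_nonneg_mul hP.isIdempotentElem hupper x
    rw [re_to_complex, re_inner_sub_algebraMap_apply_self] at h
    linarith
  · have h := re_inner_apply_nonneg_of_nonneg_mul hP.isIdempotentElem.one_sub hlower x
    rw [← neg_sub, neg_apply, inner_neg_left, map_neg, re_to_complex,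
      re_inner_sub_algebraMap_apply_self] at h
    linarith

end SpectralGap

theorem stmt11_general {H : Type*} [NormedAddCommGroup H] [InnerProductSpace ℂ H] [CompleteSpace H]
    (A C : H →L[ℂ] H) (hA : IsSelfAdjoint A) (hC : IsSelfAdjoint C)
    (b : H → ℝ) (hbnonneg : ∀ x, 0 ≤ b x)
    (a₀ b₀ : ℝ) (hb₀ : 0 ≤ b₀)
    (hrel : ∀ x : H, b x ≤ a₀ * ‖x‖ ^ 2 + b₀ * (inner ℂ (A x) x : ℂ).re)
    (hform : ∀ x : H, (inner ℂ (C x) x : ℂ).re = (inner ℂ (A x) x : ℂ).re + b x)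
    (α β : ℝ) (hαβ : α < β)
    (hgap : ∀ lam ∈ Set.Ioo α β, (lam : ℂ) ∉ spectrum ℂ A) :
    ∀ lam ∈ Set.Ioo (α + a₀ + b₀ * α) β, (lam : ℂ) ∉ spectrum ℂ C := by
  rintro lam ⟨hlam_lower, hlam_upper⟩
  obtain ⟨P, hP, hAP, hA1P⟩ :=
    hA.exists_isStarProjection_forall_re_inner_of_spectrum_gap hαβ fun t ht ↦ by
      by_contra! h
      exact hgap t h (spectrum.algebraMap_mem ℂ ht)
  set c := min (β - lam) (lam - (α + a₀ + b₀ * α))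
  have hq : ∀ y, re (inner ℂ ((C - algebraMap ℝ (H →L[ℂ] H) lam) y) y) =
      (inner ℂ (A y) y).re + b y - lam * ‖y‖ ^ 2 := fun y ↦ by
    rw [re_to_complex, re_inner_sub_algebraMap_apply_self, hform]
  have hunit : IsUnit (C - algebraMap ℝ (H →L[ℂ] H) lam) := by
    refine (hC.sub (.algebraMap _ (.all lam))).isUnit_of_re_inner_bounds hP (c := c)
      (lt_min (by linarith) (by linarith)) (fun x ↦ ?_) (fun x ↦ ?_) <;> rw [hq]
    · linarith [hAP x, hbnonneg (P x),
        mul_le_mul_of_nonneg_right (min_le_left _ _ : c ≤ _) (sq_nonneg ‖P x‖)]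
    · linarith [hA1P x, hrel ((1 - P) x), mul_le_mul_of_nonneg_left (hA1P x) hb₀,
        mul_le_mul_of_nonneg_right (min_le_right _ _ : c ≤ _) (sq_nonneg ‖(1 - P) x‖)]
  rw [spectrum.notMem_iff, ← Complex.coe_algebraMap, ← IsScalarTower.algebraMap_apply, ← neg_sub]
  exact hunit.neg

/-- Theorem 3.2: a non-negative relatively bounded form perturbation
closes a spectral gap only from the left.  (Formalised for bounded self-adjoint
operators: `A` self-adjoint with form `a[x] = Re⟨Ax,x⟩`, `b` a non-negative quadratic
functional with `b[x] ≤ a₀‖x‖² + b₀·a[x]`, and `C` the self-adjoint operator whose form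
is `a + b`.  If `(α,β) ⊂ ρ(A)` and `α̂ := α + a₀ + b₀α < β`, then `(α̂,β) ⊂ ρ(C)`.) -/
theorem stmt11 {H : Type*} [NormedAddCommGroup H] [InnerProductSpace ℂ H] [CompleteSpace H]
    (A C : H →L[ℂ] H) (hA : IsSelfAdjoint A) (hC : IsSelfAdjoint C)
    (b : H → ℝ) (hbnonneg : ∀ x, 0 ≤ b x)
    (a₀ b₀ : ℝ) (ha₀ : 0 ≤ a₀) (hb₀ : 0 ≤ b₀)
    (hrel : ∀ x : H, b x ≤ a₀ * ‖x‖ ^ 2 + b₀ * (inner ℂ (A x) x : ℂ).re)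
    (hform : ∀ x : H, (inner ℂ (C x) x : ℂ).re = (inner ℂ (A x) x : ℂ).re + b x)
    (α β : ℝ) (hαβ : α < β)
    (hgap : ∀ lam ∈ Set.Ioo α β, (lam : ℂ) ∉ spectrum ℂ A)
    (hhat : α + a₀ + b₀ * α < β) :
    ∀ lam ∈ Set.Ioo (α + a₀ + b₀ * α) β, (lam : ℂ) ∉ spectrum ℂ C :=
  stmt11_general A C hA hC b hbnonneg a₀ b₀ hb₀ hrel hform α β hαβ hgap
end

section
/- Let t : Δ → (D → ℝ) be a family of quadratic functionals on a set D of unit vectors in a Hilbert space, and let μ₁ < μ₂ in Δ. Suppose ε, δ > 0 are such that for every λ ∈ [μ₁, μ₂] and x ∈ D with ‖x‖ = 1: |t(λ)(x)| ≤ ε implies t′(λ)(x) ≤ −δ, where λ ↦ t(λ)(x) is differentiable. Then for every x ∈ D with ‖x‖ = 1: if t(μ₂)(x) ≥ −ε, then t(μ₁)(x) ≥ min{ε, t(μ₂)(x) + δ(μ₂ − μ₁)}. -/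
/-!
Under the Virozub–Matsaev condition `f` can cross the levels `ε` and `-ε` only downwards,
since at a crossing `f' ≤ -δ < 0`. So either `f(μ₁) ≥ ε`, or `f(μ₁) < ε` and `f` stays below `ε`
to the right of `μ₁`; in the latter case `f(μ₂) ≥ -ε` keeps `f` above `-ε` to the left of `μ₂`.
Then `|f| ≤ ε` on all of `[μ₁, μ₂]`, hence `f' ≤ -δ` there, and `f` drops by at least
`δ (μ₂ - μ₁)` across the interval.
-/

open Set

variable {f f' : ℝ → ℝ} {a b : ℝ}

theorem image_le_const_of_deriv_neg_at_level (hf : ∀ x ∈ Icc a b, HasDerivAt f (f' x) x)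
    {m : ℝ} (hm : ∀ x ∈ Icc a b, f x = m → f' x < 0) (ha : f a ≤ m) :
    ∀ x ∈ Icc a b, f x ≤ m :=
  image_le_of_deriv_right_lt_deriv_boundary (B := fun _ => m) (B' := 0)
    (fun x hx => (hf x hx).continuousAt.continuousWithinAt)
    (fun x hx => (hf x (Ico_subset_Icc_self hx)).hasDerivWithinAt) ha
    (fun _ => hasDerivAt_const _ _) (fun x hx => hm x (Ico_subset_Icc_self hx))

theorem const_le_image_of_deriv_neg_at_level (hf : ∀ x ∈ Icc a b, HasDerivAt f (f' x) x)
    {m : ℝ} (hm : ∀ x ∈ Icc a b, f x = m → f' x < 0) (hb : m ≤ f b) :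
    ∀ x ∈ Icc a b, m ≤ f x := by
  have mem_Icc_neg : ∀ {x}, x ∈ Icc (-b) (-a) → -x ∈ Icc a b := fun hx =>
    ⟨le_neg_of_le_neg hx.2, neg_le_of_neg_le hx.1⟩
  have hg : ∀ x ∈ Icc (-b) (-a), HasDerivAt (fun s => -f (-s)) (f' (-x)) x := fun x hx => by
    simpa using ((hf (-x) (mem_Icc_neg hx)).comp x (hasDerivAt_neg x)).fun_neg
  intro x hx
  have := image_le_const_of_deriv_neg_at_level hg (m := -m)
    (fun y hy hfy => hm (-y) (mem_Icc_neg hy) (neg_inj.1 hfy)) (by simpa using hb)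
    (-x) ⟨neg_le_neg hx.2, neg_le_neg hx.1⟩
  simpa using this

theorem min_le_of_virozub_matsaev (hf : ∀ x ∈ Icc a b, HasDerivAt f (f' x) x)
    {ε δ : ℝ} (hε : 0 ≤ ε) (hδ : 0 < δ) (hab : a ≤ b)
    (hVM : ∀ x ∈ Icc a b, |f x| ≤ ε → f' x ≤ -δ) (hb : -ε ≤ f b) :
    min ε (f b + δ * (b - a)) ≤ f a := by
  have hlevel : ∀ m, |m| ≤ ε → ∀ x ∈ Icc a b, f x = m → f' x < 0 := fun m hm x hx hfx =>
    (hVM x hx (hfx ▸ hm)).trans_lt (neg_neg_of_pos hδ)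
  rcases le_or_gt ε (f a) with ha | ha
  · exact min_le_of_left_le ha
  have habs : ∀ x ∈ Icc a b, |f x| ≤ ε := fun x hx => abs_le.2
    ⟨const_le_image_of_deriv_neg_at_level hf (hlevel (-ε) (by simp [abs_of_nonneg hε])) hb x hx,
      image_le_const_of_deriv_neg_at_level hf (hlevel ε (abs_of_nonneg hε).le) ha.le x hx⟩
  have hdrop : f b ≤ f a + -δ * (b - a) :=
    image_le_of_deriv_right_le_deriv_boundary (B := fun s => f a + -δ * (s - a)) (B' := fun _ => -δ)
      (fun x hx => (hf x hx).continuousAt.continuousWithinAt)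
      (fun x hx => (hf x (Ico_subset_Icc_self hx)).hasDerivWithinAt) (by simp)
      (by fun_prop)
      (fun x _ => by simpa using (((hasDerivAt_id x).sub_const a).const_mul (-δ)).const_add (f a)
        |>.hasDerivWithinAt)
      (fun x hx => hVM x (Ico_subset_Icc_self hx) (habs x (Ico_subset_Icc_self hx)))
      ⟨hab, le_rfl⟩
  exact min_le_of_right_le (by linarith)

/-- Lemma 2.8: let `t(λ)` be a family of real functionals on a set `D` of
unit vectors in a Hilbert space, differentiable in `λ` with derivative `t'`, satisfying
the Virozub–Matsaev condition with constants `ε, δ > 0` on `[μ₁, μ₂]`.  Then for every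
unit vector `x ∈ D` with `t(μ₂)(x) ≥ −ε` one has
`t(μ₁)(x) ≥ min {ε, t(μ₂)(x) + δ(μ₂ − μ₁)}`. -/
theorem stmt14 {H : Type*} [NormedAddCommGroup H] [InnerProductSpace ℂ H]
    (D : Set H) (t t' : ℝ → H → ℝ)
    (μ₁ μ₂ : ℝ) (hμ : μ₁ < μ₂)
    (hdiff : ∀ x ∈ D, ‖x‖ = 1 → ∀ lam ∈ Set.Icc μ₁ μ₂,
      HasDerivAt (fun s => t s x) (t' lam x) lam)
    (ε δ : ℝ) (hε : 0 < ε) (hδ : 0 < δ)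
    (hVM : ∀ x ∈ D, ‖x‖ = 1 → ∀ lam ∈ Set.Icc μ₁ μ₂,
      |t lam x| ≤ ε → t' lam x ≤ -δ) :
    ∀ x ∈ D, ‖x‖ = 1 → -ε ≤ t μ₂ x →
      min ε (t μ₂ x + δ * (μ₂ - μ₁)) ≤ t μ₁ x := fun x hxD hx =>
  min_le_of_virozub_matsaev (hdiff x hxD hx) hε.le hδ hμ.le (hVM x hxD hx)
end

section
/- Let f : [μ₁, μ₂] → ℝ be differentiable, and let ε, δ > 0 be such that |f(λ)| ≤ ε implies f′(λ) ≤ −δ for all λ ∈ [μ₁, μ₂]. If f(μ₂) ≥ −ε, then either f(μ₁) ≥ ε, or f(λ) ∈ [−ε, ε] for all λ ∈ [μ₁, μ₂] and f(μ₁) ≥ f(μ₂) + δ(μ₂ − μ₁). -/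
/-!
Where `|f| ≤ ε` the derivative is negative, so the levels `ε` and `-ε` are barriers that `f` can
only cross downwards. Hence if `f(μ₁) < ε` then `f` stays below `ε` from `μ₁` on, and since
`f(μ₂) ≥ -ε` it stays above `-ε` up to `μ₂`. So `|f| ≤ ε` on the whole interval, where then
`f' ≤ -δ`, and the mean value inequality gives the drop `δ (μ₂ - μ₁)`.
-/

open Set

section Barrier

variable {f f' : ℝ → ℝ} {a b c : ℝ}

theorem image_le_of_deriv_neg_at_level (hf : ∀ x ∈ Icc a b, HasDerivAt f (f' x) x)
    (hneg : ∀ x ∈ Icc a b, f x = c → f' x < 0) (ha : f a ≤ c) :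
    ∀ x ∈ Icc a b, f x ≤ c :=
  image_le_of_deriv_right_lt_deriv_boundary' (B' := fun _ => 0)
    (fun x hx => (hf x hx).continuousAt.continuousWithinAt)
    (fun x hx => (hf x (Ico_subset_Icc_self hx)).hasDerivWithinAt) ha continuousOn_const
    (fun x _ => hasDerivWithinAt_const x _ c)
    (fun x hx hfx => hneg x (Ico_subset_Icc_self hx) hfx)

theorem le_image_of_deriv_neg_at_level (hf : ∀ x ∈ Icc a b, HasDerivAt f (f' x) x)
    (hneg : ∀ x ∈ Icc a b, f x = c → f' x < 0) (hb : c ≤ f b) :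
    ∀ x ∈ Icc a b, c ≤ f x := by
  have hmem : ∀ x ∈ Icc (-b) (-a), -x ∈ Icc a b := fun x hx => by
    rwa [neg_mem_Icc_iff]
  have hg : ∀ x ∈ Icc (-b) (-a), HasDerivAt (fun y => -f (-y)) (f' (-x)) x := fun x hx => by
    simpa using ((hf (-x) (hmem x hx)).comp x (hasDerivAt_neg x)).fun_neg
  have hle := image_le_of_deriv_neg_at_level (c := -c) hg
    (fun x hx hgx => hneg (-x) (hmem x hx) (neg_inj.mp hgx)) (by simpa using hb)
  intro x hx
  simpa using hle (-x) (by rwa [neg_mem_Icc_iff, neg_neg, neg_neg])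

end Barrier

theorem image_le_add_mul_sub_of_deriv_le {f f' : ℝ → ℝ} {a b C : ℝ}
    (hf : ∀ x ∈ Icc a b, HasDerivAt f (f' x) x) (hab : a ≤ b) (hle : ∀ x ∈ Icc a b, f' x ≤ C) :
    f b ≤ f a + C * (b - a) :=
  image_le_of_deriv_right_le_deriv_boundary (B := fun x => f a + C * (x - a)) (B' := fun _ => C)
    (fun x hx => (hf x hx).continuousAt.continuousWithinAt)
    (fun x hx => (hf x (Ico_subset_Icc_self hx)).hasDerivWithinAt) (by simp) (by fun_prop)
    (fun x _ => by simpa using (((hasDerivAt_id x).sub_const a).const_mul C).const_add (f a)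
      |>.hasDerivWithinAt)
    (fun x hx => hle x (Ico_subset_Icc_self hx)) ⟨hab, le_rfl⟩

/-- if `f` is differentiable on `[μ₁, μ₂]` with `|f(λ)| ≤ ε ⟹ f′(λ) ≤ −δ`
(`ε, δ > 0`) and `f(μ₂) ≥ −ε`, then either `f(μ₁) ≥ ε`, or `f(λ) ∈ [−ε, ε]` for all
`λ ∈ [μ₁, μ₂]` and `f(μ₁) ≥ f(μ₂) + δ(μ₂ − μ₁)`. -/
theorem stmt15 (f f' : ℝ → ℝ) (μ₁ μ₂ : ℝ) (hμ : μ₁ < μ₂)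
    (hdiff : ∀ lam ∈ Set.Icc μ₁ μ₂, HasDerivAt f (f' lam) lam)
    (ε δ : ℝ) (hε : 0 < ε) (hδ : 0 < δ)
    (hVM : ∀ lam ∈ Set.Icc μ₁ μ₂, |f lam| ≤ ε → f' lam ≤ -δ)
    (h2 : -ε ≤ f μ₂) :
    ε ≤ f μ₁ ∨
      ((∀ lam ∈ Set.Icc μ₁ μ₂, f lam ∈ Set.Icc (-ε) ε) ∧
        f μ₂ + δ * (μ₂ - μ₁) ≤ f μ₁) := by
  rcases le_or_gt ε (f μ₁) with h1 | h1
  · exact Or.inl h1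
  have hneg : ∀ x ∈ Icc μ₁ μ₂, |f x| ≤ ε → f' x < 0 := fun x hx h =>
    (hVM x hx h).trans_lt (neg_neg_of_pos hδ)
  have hupper := image_le_of_deriv_neg_at_level hdiff
    (fun x hx hfx => hneg x hx (by rw [hfx, abs_of_pos hε])) h1.le
  have hlower := le_image_of_deriv_neg_at_level hdiff
    (fun x hx hfx => hneg x hx (by rw [hfx, abs_neg, abs_of_pos hε])) h2
  have hbounds : ∀ x ∈ Icc μ₁ μ₂, f x ∈ Icc (-ε) ε := fun x hx => ⟨hlower x hx, hupper x hx⟩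
  have hdrop := image_le_add_mul_sub_of_deriv_le hdiff hμ.le
    (fun x hx => hVM x hx (abs_le.mpr (hbounds x hx)))
  exact Or.inr ⟨hbounds, by linarith⟩
end

section
/- For each k ∈ ℕ define Tₖ : ℝ → ℝ by Tₖ(λ) = 1 for λ ≤ 0, Tₖ(λ) = 1 − kλ for 0 < λ < 2/k, and Tₖ(λ) = −1 for λ ≥ 2/k, and let T(λ) be the diagonal operator diag(T₁(λ), T₂(λ), …) on ℓ². Then: (a) for each x ∈ ℓ² \ {0}, the function λ ↦ ⟨T(λ)x, x⟩ = Σₖ Tₖ(λ)|xₖ|² satisfies Assumption (A3) (it is continuous, and if it vanishes at λ₀ it is positive for λ < λ₀ and negative for λ > λ₀); and (b) the spectrum of the operator function T, i.e. {λ ∈ ℝ : 0 ∈ σ(T(λ))}, equals {1/k : k ∈ ℕ}, consisting entirely of eigenvalues. -/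
/-!
For `x ≠ 0` the form `re ⟪T(λ)x, x⟫` is the weighted sum `∑ₖ Tₖ(λ) ‖xₖ‖²`, a uniformly
convergent series of continuous nonincreasing functions. If it vanishes at `λ₀`, some index `k`
with `xₖ ≠ 0` has `λ₀` in the linear range `(0, 2/k)` of `Tₖ`: otherwise the active `Tₖ(λ₀)` are
all `1` (when `λ₀ ≤ 0`) or all `-1`. Since `Tₖ` is strictly decreasing through such a point,
so is the series, which gives the sign change.

The diagonal operator `T(λ)` kills the `k`-th basis vector when `Tₖ(λ) = 0`, i.e. `λ = 1/k`.
Otherwise `|Tₖ(λ)|` is bounded below, because `Tₖ(λ) = ±1` for all large `k`, so `T(λ)` is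
bijective with the bounded diagonal inverse.
-/

/-- The piecewise linear functions of Remark 2.6(iii): `Tₖ(λ) = 1` for `λ ≤ 0`,
`1 − kλ` for `0 < λ < 2/k`, `−1` for `λ ≥ 2/k`.  Here the index `k : ℕ` encodes the
paper's `k + 1 ∈ {1, 2, 3, …}`. -/
noncomputable def Tfun (k : ℕ) (l : ℝ) : ℝ :=
  if l ≤ 0 then 1 else if l < 2 / (k + 1) then 1 - (k + 1) * l else -1

open Set Filter Function
open scoped lp ComplexInnerProductSpace

section Tfun

variable {k : ℕ} {a b l : ℝ}

lemma Tfun_eq_max_min (k : ℕ) (l : ℝ) : Tfun k l = max (-1) (min 1 (1 - (k + 1) * l)) := by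
  have hk : (0 : ℝ) < k + 1 := by positivity
  unfold Tfun
  split_ifs with h₀ h₂
  · rw [min_eq_left (by nlinarith), max_eq_right (by norm_num)]
  · rw [lt_div_iff₀ hk] at h₂
    rw [min_eq_right (by nlinarith), max_eq_right (by nlinarith)]
  · rw [not_lt, div_le_iff₀ hk] at h₂
    rw [min_eq_right (by nlinarith), max_eq_left (by nlinarith)]

lemma continuous_Tfun (k : ℕ) : Continuous (Tfun k) := by
  rw [funext (Tfun_eq_max_min k)]
  fun_prop

lemma antitone_Tfun (k : ℕ) : Antitone (Tfun k) := by
  intro a b hab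
  simp only [Tfun_eq_max_min]
  gcongr

lemma abs_Tfun_le_one (k : ℕ) (l : ℝ) : |Tfun k l| ≤ 1 := by
  rw [Tfun_eq_max_min, abs_le]
  exact ⟨le_max_left _ _, max_le (by norm_num) (min_le_left _ _)⟩

lemma Tfun_of_nonpos (h : l ≤ 0) : Tfun k l = 1 := if_pos h

lemma Tfun_of_two_div_le (h : 2 / (k + 1) ≤ l) : Tfun k l = -1 := by
  have hl : ¬ l ≤ 0 := fun hl => (h.trans hl).not_gt (by positivity)
  rw [Tfun, if_neg hl, if_neg h.not_gt]

lemma Tfun_of_mem_Ioo (h : l ∈ Ioo 0 (2 / ((k : ℝ) + 1))) : Tfun k l = 1 - (k + 1) * l := by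
  rw [Tfun, if_neg h.1.not_ge, if_pos h.2]

lemma Tfun_lt_Tfun (hab : a < b)
    (h : a ∈ Ioo 0 (2 / ((k : ℝ) + 1)) ∨ b ∈ Ioo 0 (2 / ((k : ℝ) + 1))) :
    Tfun k b < Tfun k a := by
  have hk : (0 : ℝ) < k + 1 := by positivity
  have hmul : (k + 1) * a < (k + 1) * b := by gcongr
  rcases h with ha | hb
  · have ha₂ := (lt_div_iff₀ hk).1 ha.2
    rw [Tfun_of_mem_Ioo ha, Tfun_eq_max_min]
    exact max_lt (by nlinarith [ha.2]) ((min_le_right _ _).trans_lt (by linarith))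
  · have hb₀ := hb.1
    rw [Tfun_of_mem_Ioo hb, Tfun_eq_max_min]
    exact (lt_min (by nlinarith) (by linarith)).trans_le (le_max_right _ _)

lemma Tfun_eq_zero_iff : Tfun k l = 0 ↔ l = 1 / (k + 1) := by
  have hk : (0 : ℝ) < k + 1 := by positivity
  unfold Tfun
  split_ifs with h₀ h₂
  · simp only [one_ne_zero, false_iff]
    exact fun h => h₀.not_gt (h ▸ by positivity)
  · rw [sub_eq_zero, eq_div_iff hk.ne', eq_comm, mul_comm]
  · rw [not_lt] at h₂
    simp only [neg_eq_zero, one_ne_zero, false_iff]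
    rintro rfl
    rw [div_le_div_iff_of_pos_right hk] at h₂
    norm_num at h₂

lemma exists_pos_forall_le_of_eventually {f : ℕ → ℝ} (hf : ∀ k, 0 < f k) {ε : ℝ} (hε : 0 < ε)
    (hev : ∀ᶠ k in atTop, ε ≤ f k) : ∃ δ > 0, ∀ k, δ ≤ f k := by
  obtain ⟨N, hN⟩ := eventually_atTop.1 hev
  obtain ⟨k₀, -, hk₀⟩ := (Finset.range (N + 1)).exists_min_image f ⟨0, by simp⟩
  refine ⟨min ε (f k₀), lt_min hε (hf k₀), fun k => ?_⟩
  rcases lt_or_ge k N with hk | hk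
  · exact (min_le_right _ _).trans (hk₀ k (Finset.mem_range.2 (by omega)))
  · exact (min_le_left _ _).trans (hN k hk)

lemma exists_pos_forall_le_abs_Tfun (h : ∀ k : ℕ, l ≠ 1 / (k + 1)) :
    ∃ δ > 0, ∀ k, δ ≤ |Tfun k l| := by
  refine exists_pos_forall_le_of_eventually
    (fun k => abs_pos.2 (mt Tfun_eq_zero_iff.1 (h k))) one_pos ?_
  rcases le_or_gt l 0 with hl | hl
  · exact Eventually.of_forall fun k => by rw [Tfun_of_nonpos hl, abs_one]
  · obtain ⟨N, hN⟩ := exists_nat_gt (2 / l)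
    filter_upwards [eventually_ge_atTop N] with k hk
    have : 2 / l < k + 1 := hN.trans_le (by exact_mod_cast hk.trans (Nat.le_succ k))
    rw [Tfun_of_two_div_le ((div_le_iff₀ (by positivity)).2 _), abs_neg, abs_one]
    rw [div_lt_iff₀ hl] at this
    linarith

end Tfun

section Weighted

variable {w : ℕ → ℝ}

lemma norm_Tfun_mul_le (hw₀ : ∀ k, 0 ≤ w k) (k : ℕ) (l : ℝ) : ‖Tfun k l * w k‖ ≤ w k := by
  rw [norm_mul, Real.norm_of_nonneg (hw₀ k)]
  exact mul_le_of_le_one_left (hw₀ k) (abs_Tfun_le_one k l)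

lemma summable_Tfun_mul (hw₀ : ∀ k, 0 ≤ w k) (hw : Summable w) (l : ℝ) :
    Summable fun k => Tfun k l * w k :=
  hw.of_norm_bounded fun k => norm_Tfun_mul_le hw₀ k l

lemma continuous_tsum_Tfun_mul (hw₀ : ∀ k, 0 ≤ w k) (hw : Summable w) :
    Continuous fun l => ∑' k, Tfun k l * w k :=
  continuous_tsum (fun k => (continuous_Tfun k).mul continuous_const) hw
    (norm_Tfun_mul_le hw₀)

lemma tsum_Tfun_mul_lt_tsum_Tfun_mul (hw₀ : ∀ k, 0 ≤ w k) (hw : Summable w) {k : ℕ} {a b : ℝ}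
    (hk : 0 < w k) (hab : a < b)
    (h : a ∈ Ioo 0 (2 / ((k : ℝ) + 1)) ∨ b ∈ Ioo 0 (2 / ((k : ℝ) + 1))) :
    ∑' j, Tfun j b * w j < ∑' j, Tfun j a * w j :=
  (summable_Tfun_mul hw₀ hw b).tsum_lt_tsum
    (fun j => mul_le_mul_of_nonneg_right (antitone_Tfun j hab.le) (hw₀ j))
    (mul_lt_mul_of_pos_right (Tfun_lt_Tfun hab h) hk) (summable_Tfun_mul hw₀ hw a)

lemma exists_mem_Ioo_of_tsum_Tfun_mul_eq_zero (hw₀ : ∀ k, 0 ≤ w k) (hpos : 0 < ∑' k, w k)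
    {l : ℝ} (h : ∑' k, Tfun k l * w k = 0) :
    ∃ k, 0 < w k ∧ l ∈ Ioo 0 (2 / ((k : ℝ) + 1)) := by
  have hl : 0 < l := by
    by_contra! hl
    simp only [Tfun_of_nonpos hl, one_mul] at h
    linarith
  by_contra! hfar
  have hneg : ∀ k, Tfun k l * w k = -w k := fun k => by
    rcases (hw₀ k).eq_or_lt with hk | hk
    · simp [← hk]
    · rw [Tfun_of_two_div_le (not_lt.1 fun h₂ => hfar k hk ⟨hl, h₂⟩), neg_one_mul]
  simp only [hneg, tsum_neg] at h
  linarith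

theorem tsum_Tfun_mul_sign_change (hw₀ : ∀ k, 0 ≤ w k) (hw : Summable w)
    (hpos : 0 < ∑' k, w k) {l₀ : ℝ} (h₀ : ∑' k, Tfun k l₀ * w k = 0) (l : ℝ) :
    (l < l₀ → 0 < ∑' k, Tfun k l * w k) ∧ (l₀ < l → ∑' k, Tfun k l * w k < 0) := by
  obtain ⟨k, hk, hl₀⟩ := exists_mem_Ioo_of_tsum_Tfun_mul_eq_zero hw₀ hpos h₀
  refine ⟨fun hl => ?_, fun hl => ?_⟩
  · exact h₀ ▸ tsum_Tfun_mul_lt_tsum_Tfun_mul hw₀ hw hk hl (.inr hl₀)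
  · exact h₀ ▸ tsum_Tfun_mul_lt_tsum_Tfun_mul hw₀ hw hk hl (.inl hl₀)

end Weighted

section Diagonal

variable {c : ℕ → ℂ} {A : ℓ²(ℕ, ℂ) →L[ℂ] ℓ²(ℕ, ℂ)}

lemma re_inner_apply_self_eq_tsum {r : ℕ → ℝ} (hA : ∀ x k, A x k = r k * x k) (x : ℓ²(ℕ, ℂ)) :
    (⟪A x, x⟫).re = ∑' k, r k * ‖x k‖ ^ 2 := by
  rw [lp.inner_eq_tsum, Complex.re_tsum (lp.summable_inner _ _)]
  congr 1 with k
  rw [hA, RCLike.inner_apply, map_mul, Complex.conj_ofReal, mul_left_comm, Complex.mul_conj']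
  norm_cast

lemma apply_single_eq_zero (hA : ∀ x k, A x k = c k * x k) {k : ℕ} (hk : c k = 0) :
    A (lp.single 2 k 1) = 0 := by
  ext j
  rw [hA, lp.coeFn_zero, Pi.zero_apply]
  rcases eq_or_ne j k with rfl | hj
  · rw [hk, zero_mul]
  · rw [lp.single_apply_ne _ _ _ hj, mul_zero]

lemma bijective_of_le_norm (hA : ∀ x k, A x k = c k * x k) {δ : ℝ} (hδ : 0 < δ)
    (hc : ∀ k, δ ≤ ‖c k‖) : Bijective A := by
  have hc₀ : ∀ k, c k ≠ 0 := fun k => norm_pos_iff.1 (hδ.trans_le (hc k))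
  refine ⟨fun x y hxy => lp.ext <| funext fun k => ?_, fun y => ?_⟩
  · have := congr_fun (congr_arg (⇑) hxy) k
    rwa [hA, hA, mul_right_inj' (hc₀ k)] at this
  · have hmem : Memℓp (fun k => (c k)⁻¹ * y k) 2 :=
      ((lp.memℓp y).norm.const_mul δ⁻¹).mono fun k => by
        rw [norm_mul, norm_inv]
        gcongr
        exact hc k
    refine ⟨⟨_, hmem⟩, lp.ext <| funext fun k => ?_⟩
    rw [hA]
    exact mul_inv_cancel_left₀ (hc₀ k) (y k)

end Diagonal

lemma lp.single_ne_zero {ι : Type*} {E : ι → Type*} [∀ i, NormedAddCommGroup (E i)]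
    [DecidableEq ι] {p : ENNReal} {i : ι} {a : E i} (ha : a ≠ 0) : lp.single p i a ≠ 0 :=
  fun h => ha (by simpa using congr_fun (congr_arg (⇑) h) i)

/-- Remark 2.6(iii): let `T(λ) = diag(T₁(λ), T₂(λ), …)` on `ℓ²`
(given as any family `Top` of bounded operators acting diagonally by the `Tfun k λ`).
(a) For each `x ∈ ℓ² \ {0}`, the function `λ ↦ ⟨T(λ)x, x⟩ = Σₖ Tₖ(λ)|xₖ|²` is
continuous and satisfies Assumption (A3).
(b) `{λ : 0 ∈ σ(T(λ))} = {1/k : k ∈ ℕ, k ≥ 1}`, and each such point is an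
eigenvalue. -/
theorem stmt19 (Top : ℝ → (lp (fun _ : ℕ => ℂ) 2 →L[ℂ] lp (fun _ : ℕ => ℂ) 2))
    (hdiag : ∀ l : ℝ, ∀ x : lp (fun _ : ℕ => ℂ) 2, ∀ k : ℕ,
      (Top l x) k = (Tfun k l : ℂ) * x k) :
    (∀ x : lp (fun _ : ℕ => ℂ) 2, x ≠ 0 →
      (Continuous fun l => (inner ℂ (Top l x) x : ℂ).re) ∧
      (∀ lam₀ : ℝ, (inner ℂ (Top lam₀ x) x : ℂ).re = 0 →
        ∀ lam : ℝ, (lam < lam₀ → 0 < (inner ℂ (Top lam x) x : ℂ).re) ∧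
          (lam₀ < lam → (inner ℂ (Top lam x) x : ℂ).re < 0))) ∧
    (∀ l : ℝ,
      ((0 : ℂ) ∈ spectrum ℂ (Top l) ↔ ∃ k : ℕ, l = 1 / (k + 1)) ∧
      ((0 : ℂ) ∈ spectrum ℂ (Top l) →
        ∃ x : lp (fun _ : ℕ => ℂ) 2, x ≠ 0 ∧ Top l x = 0)) := by
  refine ⟨fun x hx => ?_, fun l => ?_⟩
  · have hw₀ : ∀ k, 0 ≤ ‖x k‖ ^ 2 := fun k => by positivity
    have hw : Summable fun k => ‖x k‖ ^ 2 := by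
      simpa using (lp.memℓp x).summable (p := 2) (by norm_num)
    obtain ⟨k, hk⟩ : ∃ k, x k ≠ 0 := by
      by_contra! h
      exact hx (lp.ext (funext h))
    have hpos : 0 < ∑' k, ‖x k‖ ^ 2 := hw.tsum_pos hw₀ k (by positivity)
    simp only [re_inner_apply_self_eq_tsum (hdiag _)]
    exact ⟨continuous_tsum_Tfun_mul hw₀ hw,
      fun l₀ h₀ => tsum_Tfun_mul_sign_change hw₀ hw hpos h₀⟩
  · have heigen : (∃ k : ℕ, l = 1 / (k + 1)) → ∃ x, x ≠ 0 ∧ Top l x = 0 := fun ⟨k, hk⟩ =>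
      ⟨_, lp.single_ne_zero one_ne_zero,
        apply_single_eq_zero (hdiag l) (by rw [Complex.ofReal_eq_zero, Tfun_eq_zero_iff, hk])⟩
    have hspec : (0 : ℂ) ∈ spectrum ℂ (Top l) ↔ ∃ k : ℕ, l = 1 / (k + 1) := by
      rw [spectrum.zero_mem_iff, ContinuousLinearMap.isUnit_iff_bijective]
      refine ⟨fun hbij => ?_, fun hk hbij => ?_⟩
      · by_contra! hl
        obtain ⟨δ, hδ, hle⟩ := exists_pos_forall_le_abs_Tfun hl
        exact hbij (bijective_of_le_norm (hdiag l) hδ fun k => by simpa using hle k)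
      · obtain ⟨x, hx, hTx⟩ := heigen hk
        exact hx (hbij.injective (hTx.trans (map_zero _).symm))
    exact ⟨hspec, fun h => heigen (hspec.1 h)⟩
end
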